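/- In the standing setup, let U = (u₁,…,u_d) ∈ ℝ^{d₁×d} and V = (v₁,…,v_d) ∈ ℝ^{d₂×d}, and suppose rank(U) = d₁, rank(V) = d₂, R(U) + d₂ ≥ d + 2, and R(V) + d₁ ≥ d + 2. Then rank(Ω) = d(d−1)/2. -/

import Mathlib

open Matrix

/-- The flattening of the 4-way array `Ψ(D,F)`: the function on quadruples `(i,j,k,ℓ)` with
value `d_{i,k} f_{j,ℓ} + d_{j,ℓ} f_{i,k} − d_{i,ℓ} f_{j,k} − d_{j,k} f_{i,ℓ}`. -/
def vecPsi {d₁ d₂ : ℕ} (D F : Matrix (Fin d₁) (Fin d₂) ℝ) :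
    Fin d₁ × Fin d₁ × Fin d₂ × Fin d₂ → ℝ :=
  fun q => D q.1 q.2.2.1 * F q.2.1 q.2.2.2 + D q.2.1 q.2.2.2 * F q.1 q.2.2.1
    - D q.1 q.2.2.2 * F q.2.1 q.2.2.1 - D q.2.1 q.2.2.1 * F q.1 q.2.2.2

/-- `maxIndepCols H` is the largest `k ≤ n` such that every set of `k` columns of `H`
is linearly independent (the quantity `R(H)` of the paper). -/
noncomputable def maxIndepCols {m n : ℕ} (H : Matrix (Fin m) (Fin n) ℝ) : ℕ :=
  sSup {k | k ≤ n ∧ ∀ s : Finset (Fin n), s.card = k →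
    LinearIndependent ℝ (fun j : {x // x ∈ s} => Hᵀ j.1)}

/-!
The columns of `Ω` span the same space as all `Ψ(W_a, W_b)`, because `Ψ` is symmetric. As `Ψ` is
bilinear and the `W_ℓ` span the same space as the `C_ℓ`, this is the span of the
`Ψ(C_i, C_j) = (u_i ∧ u_j) ⊗ (v_i ∧ v_j)`, which vanish for `i = j`. It remains to see that the
`Ψ(C_i, C_j)` with `i < j` are linearly independent. Fix `p < q`. Since `R(V) ≥ 2` and `V` has
full row rank, `{v_p, v_q}` extends to a basis `{v_k : k ∈ B}`; put `A = B \ {p, q}`. The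
complement of `A` has `d - d₂ + 2 ≤ R(U)` elements, so the `u_k` with `k ∉ A` are independent.
Contract with vectors dual to `u_p, u_q` on `Aᶜ` and to `v_p, v_q` on `B`: a pair meeting `A` is
killed by the `v`-factor, every other pair except `(p, q)` by the `u`-factor.
-/

open Set Submodule

section LinearAlgebra

variable {K V ι : Type*} [Field K] [AddCommGroup V] [Module K V]

lemma LinearIndepOn.exists_dotProduct_eq_ite {m : Type*} [Fintype m] [DecidableEq ι]
    {v : ι → m → K} {s : Set ι} (hs : LinearIndepOn K v s) {i₀ : ι} (hi₀ : i₀ ∈ s) :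
    ∃ x : m → K, ∀ i ∈ s, x ⬝ᵥ v i = if i = i₀ then 1 else 0 := by
  classical
  set b := Module.Basis.span hs
  obtain ⟨f, hf⟩ := LinearMap.exists_extend (b.coord ⟨i₀, hi₀⟩)
  refine ⟨fun k => f fun j => if k = j then 1 else 0, fun i hi => ?_⟩
  have hvi := LinearMap.congr_fun hf (b ⟨i, hi⟩)
  rw [LinearMap.comp_apply, Submodule.subtype_apply,
    show ((b ⟨i, hi⟩ : _) : m → K) = v i from congrArg Subtype.val (Module.Basis.span_apply hs _),
    Module.Basis.coord_apply, Module.Basis.repr_self, Finsupp.single_apply] at hvi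
  simp only [Subtype.mk.injEq] at hvi
  rw [← hvi, LinearMap.pi_apply_eq_sum_univ f (v i), dotProduct]
  simp_rw [smul_eq_mul, mul_comm]

lemma exists_linearIndepOn_superset_card_eq_finrank [Fintype ι] [FiniteDimensional K V]
    {v : ι → V} (hv : span K (range v) = ⊤) {s : Finset ι} (hs : LinearIndepOn K v s) :
    ∃ B : Finset ι, s ⊆ B ∧ B.card = Module.finrank K V ∧ LinearIndepOn K v B := by
  classical
  obtain ⟨b, -, hsb, hspan, hb⟩ := exists_linearIndepOn_extension hs (subset_univ _)
  refine ⟨b.toFinset, by simpa using hsb, ?_, by simpa using hb⟩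
  have htop : span K (range fun i : b => v i) = ⊤ := by
    rw [← image_eq_range, eq_top_iff, ← hv, span_le, ← image_univ]
    exact hspan
  have := finrank_span_eq_card hb
  rw [htop, finrank_top] at this
  simp [this]

lemma LinearIndependent.of_exists_dual [DecidableEq ι] {v : ι → V}
    (h : ∀ i, ∃ f : Module.Dual K V, ∀ j, f (v j) = if j = i then 1 else 0) :
    LinearIndependent K v := by
  choose f hf using h
  exact .of_pairwise_dual_eq_zero_one v f (fun i j hij => by simp [hf, hij.symm]) (by simp [hf])

lemma span_range_sum_smul_eq [Fintype ι] [DecidableEq ι] (C : ι → V) {P : Matrix ι ι K}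
    (hP : IsUnit P.det) : span K (range fun l => ∑ i, P i l • C i) = span K (range C) := by
  apply le_antisymm
  · rw [span_le]
    rintro _ ⟨l, rfl⟩
    exact sum_mem fun i _ => smul_mem _ _ (subset_span ⟨i, rfl⟩)
  · rw [span_le]
    rintro _ ⟨p, rfl⟩
    have hC : C p = ∑ a, P⁻¹ a p • ∑ i, P i a • C i := calc
      C p = ∑ i, (P * P⁻¹) i p • C i := by simp [mul_nonsing_inv P hP, one_apply]
      _ = ∑ a, P⁻¹ a p • ∑ i, P i a • C i := by
        simp only [Finset.smul_sum, smul_smul, mul_apply, Finset.sum_smul]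
        rw [Finset.sum_comm]
        simp_rw [mul_comm]
    rw [hC]
    exact sum_mem fun a _ => smul_mem _ _ (subset_span ⟨a, rfl⟩)

lemma span_range_transpose_eq_top {m n : Type*} [Fintype m] [Fintype n] (A : Matrix m n K)
    (hA : A.rank = Fintype.card m) : span K (range Aᵀ) = ⊤ := by
  apply eq_top_of_finrank_eq
  rw [Module.finrank_fintype_fun_eq_card, ← hA, rank_eq_finrank_span_cols]
  rfl

end LinearAlgebra

section Span

variable {R M ι : Type*} [Semiring R] [AddCommMonoid M] [Module R M] [LinearOrder ι]

lemma span_range_le_pairs_eq_of_symm (g : ι → ι → M) (hg : ∀ i j, g i j = g j i) :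
    span R (range fun r : {r : ι × ι // r.1 ≤ r.2} => g r.1.1 r.1.2)
      = span R (range (Function.uncurry g)) := by
  refine le_antisymm (span_mono ?_) (span_le.2 ?_)
  · rintro _ ⟨r, rfl⟩
    exact ⟨r.1, rfl⟩
  · rintro _ ⟨⟨i, j⟩, rfl⟩
    rcases le_total i j with h | h
    · exact subset_span ⟨⟨(i, j), h⟩, rfl⟩
    · exact subset_span ⟨⟨(j, i), h⟩, hg j i⟩

lemma span_range_lt_pairs_eq_of_symm (g : ι → ι → M) (hg : ∀ i j, g i j = g j i)
    (hg₀ : ∀ i, g i i = 0) :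
    span R (range fun r : {r : ι × ι // r.1 < r.2} => g r.1.1 r.1.2)
      = span R (range (Function.uncurry g)) := by
  refine le_antisymm (span_mono ?_) (span_le.2 ?_)
  · rintro _ ⟨r, rfl⟩
    exact ⟨r.1, rfl⟩
  · rintro _ ⟨⟨i, j⟩, rfl⟩
    rcases lt_trichotomy i j with h | rfl | h
    · exact subset_span ⟨⟨(i, j), h⟩, rfl⟩
    · simp [hg₀]
    · exact subset_span ⟨⟨(j, i), h⟩, hg j i⟩

end Span

lemma Fintype.card_subtype_fst_lt_snd (ι : Type*) [Fintype ι] [LinearOrder ι] :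
    Fintype.card {r : ι × ι // r.1 < r.2} = (Fintype.card ι).choose 2 := by
  classical
  rw [Fintype.card_subtype, ← Finset.univ_product_univ, Finset.card_product_filter_lt,
    Finset.card_univ]

lemma linearIndepOn_transpose_of_card_le_maxIndepCols {m n : ℕ} (H : Matrix (Fin m) (Fin n) ℝ)
    {s : Finset (Fin n)} (hs : s.card ≤ maxIndepCols H) : LinearIndepOn ℝ Hᵀ s := by
  have hmem : maxIndepCols H ∈ {k | k ≤ n ∧ ∀ s : Finset (Fin n), s.card = k →
      LinearIndependent ℝ (fun j : {x // x ∈ s} => Hᵀ j.1)} := by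
    refine Nat.sSup_mem ⟨0, Nat.zero_le n, fun s hs => ?_⟩ ⟨n, fun _ hk => hk.1⟩
    rw [Finset.card_eq_zero.1 hs]
    exact linearIndependent_empty_type
  obtain ⟨t, hst, -, ht⟩ := Finset.exists_subsuperset_card_eq (Finset.subset_univ s) hs
    (by simpa using hmem.1)
  exact LinearIndepOn.mono (hmem.2 t ht) (by simpa using hst)

lemma sum_mul_wedge {R m : Type*} [CommRing R] [Fintype m] (x y a b : m → R) :
    ∑ kl : m × m, x kl.1 * y kl.2 * (a kl.1 * b kl.2 - a kl.2 * b kl.1)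
      = (x ⬝ᵥ a) * (y ⬝ᵥ b) - (x ⬝ᵥ b) * (y ⬝ᵥ a) := by
  simp only [dotProduct, Finset.sum_mul_sum, Fintype.sum_prod_type, ← Finset.sum_sub_distrib]
  exact Finset.sum_congr rfl fun k _ => Finset.sum_congr rfl fun l _ => by ring

lemma dotProduct_wedge_eq_ite {ι m : Type*} [Fintype m] [LinearOrder ι] {a : ι → m → ℝ}
    {T : Finset ι} {x y : m → ℝ} {p q i j : ι}
    (hx : ∀ k ∈ T, x ⬝ᵥ a k = if k = p then 1 else 0)
    (hy : ∀ k ∈ T, y ⬝ᵥ a k = if k = q then 1 else 0)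
    (hpq : p < q) (hij : i < j) (hi : i ∈ T) (hj : j ∈ T) :
    (x ⬝ᵥ a i) * (y ⬝ᵥ a j) - (x ⬝ᵥ a j) * (y ⬝ᵥ a i) = if i = p ∧ j = q then 1 else 0 := by
  rw [hx i hi, hy j hj, hx j hj, hy i hi]
  split_ifs <;> grind

lemma wedge_mul_wedge_eq_ite {ι m n : Type*} [Fintype ι] [LinearOrder ι] [Fintype m] [Fintype n]
    {a : ι → m → ℝ} {b : ι → n → ℝ} {B : Finset ι} {p q i j : ι} {z w : m → ℝ} {x y : n → ℝ}
    (hpq : p < q) (hpB : p ∈ B) (hqB : q ∈ B)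
    (hz : ∀ k ∈ (B \ {p, q})ᶜ, z ⬝ᵥ a k = if k = p then 1 else 0)
    (hw : ∀ k ∈ (B \ {p, q})ᶜ, w ⬝ᵥ a k = if k = q then 1 else 0)
    (hx : ∀ k ∈ B, x ⬝ᵥ b k = if k = p then 1 else 0)
    (hy : ∀ k ∈ B, y ⬝ᵥ b k = if k = q then 1 else 0) (hij : i < j) :
    ((z ⬝ᵥ a i) * (w ⬝ᵥ a j) - (z ⬝ᵥ a j) * (w ⬝ᵥ a i)) *
        ((x ⬝ᵥ b i) * (y ⬝ᵥ b j) - (x ⬝ᵥ b j) * (y ⬝ᵥ b i))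
      = if i = p ∧ j = q then 1 else 0 := by
  by_cases hA : i ∈ B \ {p, q} ∨ j ∈ B \ {p, q}
  · have hb₀ : ∀ k ∈ B \ {p, q}, x ⬝ᵥ b k = 0 ∧ y ⬝ᵥ b k = 0 := fun k hk => by
      simp only [Finset.mem_sdiff, Finset.mem_insert, Finset.mem_singleton, not_or] at hk
      simp [hx k hk.1, hy k hk.1, hk.2]
    have hne : ¬(i = p ∧ j = q) := by
      rintro ⟨rfl, rfl⟩
      simp at hA
    rcases hA with h | h <;> simp [hb₀ _ h, hne]
  · rw [not_or] at hA
    rw [dotProduct_wedge_eq_ite hz hw hpq hij (Finset.mem_compl.2 hA.1) (Finset.mem_compl.2 hA.2)]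
    split_ifs with h
    · obtain ⟨rfl, rfl⟩ := h
      rw [dotProduct_wedge_eq_ite hx hy hpq hpq hpB hqB, if_pos ⟨rfl, rfl⟩, one_mul]
    · rw [zero_mul]

section VecPsi

variable {d₁ d₂ : ℕ}

lemma vecPsi_comm (D F : Matrix (Fin d₁) (Fin d₂) ℝ) : vecPsi D F = vecPsi F D := by
  ext q
  simp only [vecPsi]
  ring

def vecPsiBilin (d₁ d₂ : ℕ) : Matrix (Fin d₁) (Fin d₂) ℝ →ₗ[ℝ] Matrix (Fin d₁) (Fin d₂) ℝ →ₗ[ℝ]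
    (Fin d₁ × Fin d₁ × Fin d₂ × Fin d₂ → ℝ) :=
  LinearMap.mk₂ ℝ vecPsi
    (fun _ _ _ => by ext; simp only [vecPsi, Matrix.add_apply, Pi.add_apply]; ring)
    (fun _ _ _ => by ext; simp only [vecPsi, Matrix.smul_apply, Pi.smul_apply, smul_eq_mul]; ring)
    (fun _ _ _ => by ext; simp only [vecPsi, Matrix.add_apply, Pi.add_apply]; ring)
    (fun _ _ _ => by ext; simp only [vecPsi, Matrix.smul_apply, Pi.smul_apply, smul_eq_mul]; ring)

lemma vecPsi_vecMulVec (u₁ u₂ : Fin d₁ → ℝ) (v₁ v₂ : Fin d₂ → ℝ) :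
    vecPsi (vecMulVec u₁ v₁) (vecMulVec u₂ v₂) = fun q =>
      (u₁ q.1 * u₂ q.2.1 - u₁ q.2.1 * u₂ q.1) *
        (v₁ q.2.2.1 * v₂ q.2.2.2 - v₁ q.2.2.2 * v₂ q.2.2.1) := by
  ext q
  simp only [vecPsi, vecMulVec_apply]
  ring

lemma vecPsi_vecMulVec_self (u : Fin d₁ → ℝ) (v : Fin d₂ → ℝ) :
    vecPsi (vecMulVec u v) (vecMulVec u v) = 0 := by
  rw [vecPsi_vecMulVec]
  ext q
  simp only [Pi.zero_apply]
  ring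

lemma dotProduct_vecPsi_vecMulVec (z w u₁ u₂ : Fin d₁ → ℝ) (x y v₁ v₂ : Fin d₂ → ℝ) :
    (fun q => z q.1 * w q.2.1 * (x q.2.2.1 * y q.2.2.2)) ⬝ᵥ
        vecPsi (vecMulVec u₁ v₁) (vecMulVec u₂ v₂)
      = ((z ⬝ᵥ u₁) * (w ⬝ᵥ u₂) - (z ⬝ᵥ u₂) * (w ⬝ᵥ u₁)) *
          ((x ⬝ᵥ v₁) * (y ⬝ᵥ v₂) - (x ⬝ᵥ v₂) * (y ⬝ᵥ v₁)) := by
  rw [← sum_mul_wedge, ← sum_mul_wedge, Fintype.sum_mul_sum, vecPsi_vecMulVec, dotProduct]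
  simp only [Fintype.sum_prod_type]
  refine Finset.sum_congr rfl fun a _ => Finset.sum_congr rfl fun b _ =>
    Finset.sum_congr rfl fun k _ => Finset.sum_congr rfl fun l _ => ?_
  ring

end VecPsi

lemma span_range_vecPsi_eq_map₂ {d₁ d₂ : ℕ} {ι : Type*} (W : ι → Matrix (Fin d₁) (Fin d₂) ℝ) :
    span ℝ (range (Function.uncurry fun a b => vecPsi (W a) (W b)))
      = map₂ (vecPsiBilin d₁ d₂) (span ℝ (range W)) (span ℝ (range W)) := by
  rw [map₂_span_span, image2_range]
  rfl

section Independence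

variable {d₁ d₂ : ℕ} {ι : Type*} [Fintype ι] [LinearOrder ι]
  {u : ι → Fin d₁ → ℝ} {v : ι → Fin d₂ → ℝ}

lemma exists_dual_vecPsi_vecMulVec_eq_ite (hv : span ℝ (range v) = ⊤)
    (hv₂ : ∀ s : Finset ι, s.card ≤ 2 → LinearIndepOn ℝ v s)
    (hu : ∀ s : Finset ι, s.card + d₂ ≤ Fintype.card ι + 2 → LinearIndepOn ℝ u s)
    (r₀ : {r : ι × ι // r.1 < r.2}) :
    ∃ f : Module.Dual ℝ (Fin d₁ × Fin d₁ × Fin d₂ × Fin d₂ → ℝ), ∀ r : {r : ι × ι // r.1 < r.2},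
      f (vecPsi (vecMulVec (u r.1.1) (v r.1.1)) (vecMulVec (u r.1.2) (v r.1.2)))
        = if r = r₀ then 1 else 0 := by
  classical
  obtain ⟨⟨p, q⟩, hpq⟩ := r₀
  obtain ⟨B, hpqB, hBcard, hB⟩ :=
    exists_linearIndepOn_superset_card_eq_finrank hv (hv₂ {p, q} Finset.card_le_two)
  rw [Module.finrank_fin_fun] at hBcard
  have hpB : p ∈ B := hpqB (by simp)
  have hqB : q ∈ B := hpqB (by simp)
  have hAcard : (B \ {p, q}).card + 2 = d₂ := by
    have := Finset.card_le_card hpqB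
    rw [Finset.card_sdiff_of_subset hpqB, Finset.card_pair hpq.ne] at *
    omega
  have hS : LinearIndepOn ℝ u ↑(B \ {p, q})ᶜ := hu _ (by
    rw [Finset.card_compl]; have := (B \ {p, q}).card_le_univ; omega)
  obtain ⟨x, hx⟩ := hB.exists_dotProduct_eq_ite hpB
  obtain ⟨y, hy⟩ := hB.exists_dotProduct_eq_ite hqB
  obtain ⟨z, hz⟩ := hS.exists_dotProduct_eq_ite (i₀ := p) (by simp)
  obtain ⟨w, hw⟩ := hS.exists_dotProduct_eq_ite (i₀ := q) (by simp)
  refine ⟨dotProductBilin ℝ ℝ fun q => z q.1 * w q.2.1 * (x q.2.2.1 * y q.2.2.2),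
    fun ⟨(i, j), hij⟩ => ?_⟩
  simp only [dotProductBilin_apply_apply, dotProduct_vecPsi_vecMulVec, Subtype.mk.injEq,
    Prod.mk.injEq]
  exact wedge_mul_wedge_eq_ite hpq hpB hqB hz hw hx hy hij

lemma linearIndependent_vecPsi_vecMulVec (hv : span ℝ (range v) = ⊤)
    (hv₂ : ∀ s : Finset ι, s.card ≤ 2 → LinearIndepOn ℝ v s)
    (hu : ∀ s : Finset ι, s.card + d₂ ≤ Fintype.card ι + 2 → LinearIndepOn ℝ u s) :
    LinearIndependent ℝ fun r : {r : ι × ι // r.1 < r.2} =>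
      vecPsi (vecMulVec (u r.1.1) (v r.1.1)) (vecMulVec (u r.1.2) (v r.1.2)) :=
  .of_exists_dual (exists_dual_vecPsi_vecMulVec_eq_ite hv hv₂ hu)

end Independence

theorem stmt8_general (d d₁ d₂ : ℕ)
    (u : Fin d → Fin d₁ → ℝ) (v : Fin d → Fin d₂ → ℝ)
    (Θ : Matrix (Fin d) (Fin d) ℝ) (hΘ : IsUnit Θ.det)
    (W : Fin d → Matrix (Fin d₁) (Fin d₂) ℝ)
    (hW : ∀ ℓ, W ℓ = ∑ i, Θ⁻¹ i ℓ • Matrix.vecMulVec (u i) (v i))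
    (Ω : Matrix (Fin d₁ × Fin d₁ × Fin d₂ × Fin d₂) {pr : Fin d × Fin d // pr.1 ≤ pr.2} ℝ)
    (hΩ : ∀ idx pr, Ω idx pr = vecPsi (W pr.val.1) (W pr.val.2) idx)
    (U : Matrix (Fin d₁) (Fin d) ℝ) (hUdef : U = Matrix.of fun i ℓ => u ℓ i)
    (V : Matrix (Fin d₂) (Fin d) ℝ) (hVdef : V = Matrix.of fun i ℓ => v ℓ i)
    (hU : U.rank = d₁) (hV : V.rank = d₂)
    (hRU : maxIndepCols U + d₂ ≥ d + 2) (hRV : maxIndepCols V + d₁ ≥ d + 2) :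
    Ω.rank = d * (d - 1) / 2 := by
  have hUu : Uᵀ = u := by subst hUdef; rfl
  have hVv : Vᵀ = v := by subst hVdef; rfl
  have hd₁ : d₁ ≤ d := hU ▸ U.rank_le_width
  have hli := linearIndependent_vecPsi_vecMulVec
    (hVv ▸ span_range_transpose_eq_top V (by simpa using hV))
    (fun s hs => hVv ▸ linearIndepOn_transpose_of_card_le_maxIndepCols V (by omega))
    (fun s hs => hUu ▸ linearIndepOn_transpose_of_card_le_maxIndepCols U <| by
      rw [Fintype.card_fin] at hs; omega)
  have hWC : span ℝ (range W) = span ℝ (range fun i => vecMulVec (u i) (v i)) := by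
    rw [show W = _ from funext hW]
    exact span_range_sum_smul_eq _ (isUnit_nonsing_inv_det Θ hΘ)
  have hcols : Ω.col = fun r => vecPsi (W r.1.1) (W r.1.2) := funext fun r => funext (hΩ · r)
  rw [rank_eq_finrank_span_cols, hcols,
    span_range_le_pairs_eq_of_symm (fun a b => vecPsi (W a) (W b)) fun _ _ => vecPsi_comm _ _,
    span_range_vecPsi_eq_map₂, hWC, ← span_range_vecPsi_eq_map₂,
    ← span_range_lt_pairs_eq_of_symm
      (fun i j => vecPsi (vecMulVec (u i) (v i)) (vecMulVec (u j) (v j)))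
      (fun _ _ => vecPsi_comm _ _) fun _ => vecPsi_vecMulVec_self _ _,
    finrank_span_eq_card hli, Fintype.card_subtype_fst_lt_snd, Fintype.card_fin,
    Nat.choose_two_right]

theorem stmt8 (d d₁ d₂ : ℕ) (hd : 2 ≤ d) (hd₁ : 1 ≤ d₁) (hd₂ : 1 ≤ d₂)
    (u : Fin d → Fin d₁ → ℝ) (v : Fin d → Fin d₂ → ℝ)
    (hu : ∀ ℓ, u ℓ ⬝ᵥ u ℓ = 1) (hv : ∀ ℓ, v ℓ ⬝ᵥ v ℓ = 1)
    (hli : LinearIndependent ℝ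
      (fun ℓ : Fin d => fun pr : Fin d₂ × Fin d₁ => v ℓ pr.1 * u ℓ pr.2))
    (Θ : Matrix (Fin d) (Fin d) ℝ) (hΘ : IsUnit Θ.det)
    (W : Fin d → Matrix (Fin d₁) (Fin d₂) ℝ)
    (hW : ∀ ℓ, W ℓ = ∑ i, Θ⁻¹ i ℓ • Matrix.vecMulVec (u i) (v i))
    (Ω : Matrix (Fin d₁ × Fin d₁ × Fin d₂ × Fin d₂) {pr : Fin d × Fin d // pr.1 ≤ pr.2} ℝ)
    (hΩ : ∀ idx pr, Ω idx pr = vecPsi (W pr.val.1) (W pr.val.2) idx)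
    (U : Matrix (Fin d₁) (Fin d) ℝ) (hUdef : U = Matrix.of fun i ℓ => u ℓ i)
    (V : Matrix (Fin d₂) (Fin d) ℝ) (hVdef : V = Matrix.of fun i ℓ => v ℓ i)
    (hU : U.rank = d₁) (hV : V.rank = d₂)
    (hRU : maxIndepCols U + d₂ ≥ d + 2) (hRV : maxIndepCols V + d₁ ≥ d + 2) :
    Ω.rank = d * (d - 1) / 2 :=
  stmt8_general d d₁ d₂ u v Θ hΘ W hW Ω hΩ U hUdef V hVdef hU hV hRU hRV
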